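/- No wheel is a Burling graph: if G is a graph consisting of an induced cycle H of length at least 4 together with one additional vertex c having at least three neighbors on H (and no other vertices), then no orientation of G can be derived from a Burling tree. -/

import Mathlib

/-- An oriented graph on vertex type `V`: an irreflexive, asymmetric arc relation. -/
structure OrientedGraph (V : Type) where
  arc : V → V → Prop
  irrefl : ∀ v, ¬ arc v v
  asymm : ∀ u v, arc u v → ¬ arc v u

/-- A Burling tree `(T, root, lastBorn, choose)`.  The tree is encoded by its parent
function (with `parent root = root`); `lastBorn v` is a distinguished child of each
non-leaf `v`; `choose v` is the vertex set of a (possibly empty) branch of the tree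
starting at the last-born of the parent of `v` when `v` is neither the root nor a
last-born, and is empty otherwise. -/
structure BurlingTree (V : Type) where
  root : V
  parent : V → V
  parent_root : parent root = root
  reaches_root : ∀ v, ∃ n, parent^[n] v = root
  lastBorn : V → V
  lastBorn_child : ∀ v w, w ≠ root → parent w = v →
    lastBorn v ≠ root ∧ parent (lastBorn v) = v
  choose : V → Set V
  choose_root : choose root = ∅
  choose_lastBorn : ∀ v, v ≠ root → lastBorn (parent v) = v → choose v = ∅
  choose_branch : ∀ v, v ≠ root → lastBorn (parent v) ≠ v →
    choose v = ∅ ∨ ∃ b, (∃ n, parent^[n] b = lastBorn (parent v)) ∧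
      choose v = {x | (∃ n, parent^[n] x = lastBorn (parent v)) ∧ ∃ n, parent^[n] b = x}

namespace BurlingTree

variable {V : Type} (T : BurlingTree V)

/-- `u` is an ancestor of `v` in `T` (possibly `u = v`). -/
def Anc (u v : V) : Prop := ∃ n, T.parent^[n] v = u

/-- Arc relation of the oriented graph derived from `T` with vertex set `S`
(the induced subgraph, on `S`, of the graph fully derived from `T`). -/
def Arc (S : Set V) (u v : V) : Prop := u ∈ S ∧ v ∈ S ∧ v ∈ T.choose u

/-- Underlying undirected graph of the derived graph on `S`. -/
def UGraph (S : Set V) : SimpleGraph V := SimpleGraph.fromRel (T.Arc S)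

/-- Closed in-neighborhood `N⁻[v]` in the derived graph on `S`. -/
def InNbhd (S : Set V) (v : V) : Set V := insert v {u | T.Arc S u v}

/-- The top-set of the derived graph on `S`: vertices of `S` that are the unique
vertex of `S` on the branch of `T` from the root to them. -/
def TopSet (S : Set V) : Set V := {v | v ∈ S ∧ ∀ x ∈ S, T.Anc x v → x = v}

end BurlingTree

/-- Reachability between `u` and `w` inside the set `A` of vertices of `G`. -/
def ReachIn {V : Type} (G : SimpleGraph V) (A : Set V) (u w : V) : Prop :=
  Relation.ReflTransGen (fun x y => x ∈ A ∧ y ∈ A ∧ G.Adj x y) u w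

/-- `N⁻[v]` is a full in-star cutset of the graph derived from `T` on `S`. -/
def BurlingTree.IsFullInStarCutset {V : Type} (T : BurlingTree V) (S : Set V) (v : V) : Prop :=
  ∃ a ∈ S \ T.InNbhd S v, ∃ b ∈ S \ T.InNbhd S v,
    ¬ ReachIn (T.UGraph S) (S \ T.InNbhd S v) a b

/-- The arc relation `A` is an in-forest: a disjoint union of orientations of rooted
trees with all edges oriented towards the root.  Equivalently: it is irreflexive and
asymmetric, its underlying graph is a forest, every vertex has at most one
out-neighbor, and from every vertex the unique outgoing directed path terminates in
a sink. -/
def IsInForestRel {V : Type} (A : V → V → Prop) : Prop :=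
  (∀ v, ¬ A v v) ∧ (∀ u v, A u v → ¬ A v u) ∧
  (SimpleGraph.fromRel A).IsAcyclic ∧
  (∀ u v w, A u v → A u w → v = w) ∧
  (∀ v, ∃ r, Relation.ReflTransGen A v r ∧ ∀ w, ¬ A r w)

/-- The arc relation `A` forms an in-tree on the vertex set `U`:
an in-forest all of whose vertices in `U` reach a common root. -/
def IsInTreeOn {V : Type} (A : V → V → Prop) (U : Set V) : Prop :=
  IsInForestRel A ∧ ∃ r ∈ U, ∀ v ∈ U, Relation.ReflTransGen A v r

/-- The graph with arc relation `A` and vertex set `U` is an oriented chandelier: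
it is obtained from an in-tree `G'` (on `U` minus an apex `v`) with at least two
leaves by adding the vertex `v` and exactly the arcs from each leaf of `G'` to `v`.
A leaf of the in-tree is a source having exactly one out-neighbor. -/
def ChandelierOn {V : Type} (A : V → V → Prop) (U : Set V) : Prop :=
  ∃ v ∈ U,
    IsInTreeOn (fun a b => A a b ∧ a ≠ v ∧ b ≠ v) (U \ {v}) ∧
    (∀ u, ¬ A v u) ∧
    (∀ u, A u v ↔ (u ∈ U ∧ u ≠ v ∧ (∀ w, ¬ (A w u ∧ w ≠ v ∧ u ≠ v)) ∧
       ∃ w, A u w ∧ w ≠ v ∧ u ≠ v)) ∧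
    (∃ u₁ u₂, u₁ ≠ u₂ ∧ A u₁ v ∧ A u₂ v)

namespace OrientedGraph

variable {V : Type} (G : OrientedGraph V)

/-- Underlying undirected simple graph of an oriented graph. -/
def toSimpleGraph : SimpleGraph V := SimpleGraph.fromRel G.arc

/-- `G` is an in-forest. -/
def IsInForest : Prop := IsInForestRel G.arc

/-- `G` is an oriented chandelier. -/
def IsChandelier : Prop := ChandelierOn G.arc Set.univ

/-- Closed in-neighborhood `N⁻[v]`. -/
def InNbhd (v : V) : Set V := insert v {u | G.arc u v}

/-- `G` has a full in-star cutset: for some vertex `v`, removing `N⁻[v]`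
disconnects the underlying graph. -/
def HasFullInStarCutset : Prop :=
  ∃ v, ∃ a ∈ (G.InNbhd v)ᶜ, ∃ b ∈ (G.InNbhd v)ᶜ,
    ¬ ReachIn G.toSimpleGraph (G.InNbhd v)ᶜ a b

/-- `v` is a cut vertex of `G`: some two vertices distinct from `v` are connected
in the underlying graph but disconnected after removing `v`. -/
def IsCutVertex (v : V) : Prop :=
  ∃ a b, a ≠ v ∧ b ≠ v ∧ G.toSimpleGraph.Reachable a b ∧
    ¬ ReachIn G.toSimpleGraph {v}ᶜ a b

/-- `G` is a `k`-Burling oriented graph: it is isomorphic to a graph derived from a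
Burling tree `T` such that every branch of `T` contains at most `k` vertices of `G`. -/
def IsKBurling (k : ℕ) : Prop :=
  ∃ (W : Type) (T : BurlingTree W) (f : V → W),
    Function.Injective f ∧
    (∀ u v, G.arc u v ↔ T.Arc (Set.range f) (f u) (f v)) ∧
    ∀ b : W, ({x | x ∈ Set.range f ∧ T.Anc x b}).ncard ≤ k

end OrientedGraph

/-- The graph with arc relation `A` on vertex set `U` is (isomorphic to) a graph
derived from some Burling tree. -/
def IsDerivedOn {V : Type} (A : V → V → Prop) (U : Set V) : Prop :=
  ∃ (W : Type) (T : BurlingTree W) (f : V → W),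
    Set.InjOn f U ∧ ∀ a ∈ U, ∀ b ∈ U, (A a b ↔ f b ∈ T.choose (f a))

/-- `C` is a hole of the graph derived from `T` on `S`: an induced cycle of length
at least 4 of the underlying graph (a finite set of at least four vertices whose
induced subgraph is connected and 2-regular). -/
def BurlingTree.IsHole {V : Type} (T : BurlingTree V) (S : Set V) (C : Set V) : Prop :=
  C ⊆ S ∧ C.Finite ∧ 4 ≤ C.ncard ∧
  (∀ x ∈ C, ({y | y ∈ C ∧ (T.UGraph S).Adj x y}).ncard = 2) ∧
  (∀ x ∈ C, ∀ y ∈ C, ReachIn (T.UGraph S) C x y)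

/-- `p` is the pivot of the hole `C`: a sink of the hole both of whose neighbors in
the hole are sources of the hole (the antennas). -/
def BurlingTree.IsPivotOf {V : Type} (T : BurlingTree V) (S : Set V) (C : Set V) (p : V) : Prop :=
  p ∈ C ∧ (∀ w ∈ C, ¬ T.Arc S p w) ∧
  (∀ q ∈ C, (T.UGraph S).Adj p q → ∀ w ∈ C, ¬ T.Arc S w q)

/-!
Every arc `u → v` of a graph derived from a Burling tree points into a branch hanging from the
last-born sibling of `u`. Hence the out-neighbours of a vertex form a chain in the tree order, arcs
leaving a strict descendant of `t` stay strictly below `t`, an arc `u → v` also reaches every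
ancestor of `v` that is not an ancestor of `u`, and a depth-based potential increases along arcs,
so a vertex set in which every vertex has at most one out-neighbour spans fewer arcs than vertices.

Counting the edges of a hole `C` against its vertices then yields a pivot `p`, the only vertex of
`C` with a strict descendant in `C`: its two neighbours on `C` are antennas, pointing to `p` and
to one vertex below `p`, and the rest of `C` lies below `p`. A centre `c` with three neighbours on
`C` must lie strictly below `p`, with no other vertex of `C` above it. Let `O` be the vertices of
`C` below `p` but outside the subtree of `c`. Every vertex of `O ∪ {c}` has at most one
out-neighbour there, which bounds the arcs inside `O`; the handshake identity for `O` inside the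
2-regular `C` bounds the edges leaving `O` by the in-neighbours of `c`; the two bounds leave room
for at most two neighbours of `c`.
-/

open Finset

namespace Rel

lemma card_interedges_eq_sum {α β : Type*} (r : α → β → Prop) [∀ a, DecidablePred (r a)]
    (s : Finset α) (t : Finset β) : #(interedges r s t) = ∑ a ∈ s, #{b ∈ t | r a b} := by
  simp only [interedges, card_filter, sum_product]

variable {α : Type*} (r : α → α → Prop) [∀ a, DecidablePred (r a)]

lemma card_interedges_self_lt {φ : α → ℕ} (hφ : ∀ a b, r a b → φ a < φ b)
    {s : Finset α} (hs : s.Nonempty) (hout : ∀ a ∈ s, #{b ∈ s | r a b} ≤ 1) :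
    #(interedges r s s) < #s := by
  classical
  obtain ⟨m, hm, hmax⟩ := s.exists_max_image φ hs
  have hsink : #{b ∈ s | r m b} = 0 := by
    rw [card_eq_zero, filter_eq_empty_iff]
    exact fun b hb hmb => (hφ m b hmb).not_ge (hmax b hb)
  calc #(interedges r s s) = ∑ a ∈ s.erase m, #{b ∈ s | r a b} := by
        rw [card_interedges_eq_sum, ← add_sum_erase s _ hm, hsink, zero_add]
    _ ≤ ∑ a ∈ s.erase m, 1 := sum_le_sum fun a ha => hout a (mem_of_mem_erase ha)
    _ < #s := by simpa using card_erase_lt_of_mem hm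

lemma card_interedges_insert_ge [DecidableEq α] {a : α} {s : Finset α} (ha : a ∉ s) :
    #(interedges r s s) + #{x ∈ s | r x a} + #{x ∈ s | r a x} ≤
      #(interedges r (insert a s) (insert a s)) := by
  have hrow : ∀ x ∈ s, #{y ∈ insert a s | r x y} = #{y ∈ s | r x y} + if r x a then 1 else 0 := by
    intro x _
    rw [filter_insert]
    split_ifs <;> simp [card_insert_of_notMem, ha]
  rw [card_interedges_eq_sum, card_interedges_eq_sum, sum_insert ha, sum_congr rfl hrow,
    sum_add_distrib, ← card_filter (r · a)]
  have := card_le_card (filter_subset_filter (fun x => r a x) (subset_insert a s))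
  omega

end Rel

namespace SimpleGraph

variable {α : Type*}

lemma card_interedges_fromRel {G : SimpleGraph α} [DecidableRel G.Adj]
    {r : α → α → Prop} [∀ a, DecidablePred (r a)] (hG : G = fromRel r)
    (hr : ∀ a b, r a b → ¬ r b a) (s : Finset α) :
    #(G.interedges s s) = 2 * #(Rel.interedges r s s) := by
  subst hG
  classical
  have hsplit : (fromRel r).interedges s s =
      Rel.interedges r s s ∪ (Rel.interedges r s s).map (Equiv.prodComm α α).toEmbedding := by
    ext ⟨x, y⟩
    simp only [mk_mem_interedges_iff, fromRel_adj, mem_union, mem_map,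
      Rel.mk_mem_interedges_iff, Equiv.toEmbedding_apply, Equiv.prodComm_apply, Prod.exists,
      Prod.swap_prod_mk, Prod.mk.injEq]
    constructor
    · rintro ⟨hx, hy, -, h | h⟩
      · exact Or.inl ⟨hx, hy, h⟩
      · exact Or.inr ⟨y, x, ⟨hy, hx, h⟩, rfl, rfl⟩
    · rintro (⟨hx, hy, h⟩ | ⟨_, _, ⟨hy, hx, h⟩, rfl, rfl⟩)
      · exact ⟨hx, hy, fun e => hr x y h (e ▸ h), Or.inl h⟩
      · exact ⟨hx, hy, fun e => hr _ _ h (e ▸ h), Or.inr h⟩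
  have hdisj : Disjoint (Rel.interedges r s s)
      ((Rel.interedges r s s).map (Equiv.prodComm α α).toEmbedding) := by
    rw [Finset.disjoint_left]
    rintro ⟨x, y⟩ h h'
    simp only [mem_map, Rel.mem_interedges_iff, Equiv.toEmbedding_apply, Equiv.prodComm_apply,
      Prod.exists, Prod.swap_prod_mk, Prod.mk.injEq] at h h'
    obtain ⟨_, _, ⟨-, -, h'⟩, rfl, rfl⟩ := h'
    exact hr _ _ h.2.2 h'
  rw [hsplit, card_union_of_disjoint hdisj, card_map, two_mul]

lemma card_interedges_sdiff_add_card_interedges_self (G : SimpleGraph α) [DecidableRel G.Adj]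
    [DecidableEq α] {C D : Finset α} (hD : D ⊆ C) (hC : ∀ x ∈ C, #{y ∈ C | G.Adj x y} = 2) :
    #(G.interedges D (C \ D)) + #(G.interedges D D) = 2 * #D := by
  have hrow : ∀ x ∈ D, #{y ∈ C \ D | G.Adj x y} + #{y ∈ D | G.Adj x y} = 2 := by
    intro x hx
    rw [← hC x (hD hx), ← card_union_of_disjoint (disjoint_filter_filter sdiff_disjoint),
      ← filter_union, sdiff_union_of_subset hD]
  simp only [interedges_def]
  rw [← Rel.interedges, ← Rel.interedges, Rel.card_interedges_eq_sum, Rel.card_interedges_eq_sum,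
    ← sum_add_distrib, sum_congr rfl hrow, sum_const, smul_eq_mul, mul_comm]

end SimpleGraph

lemma Finset.ncard_setOf_mem_and {α : Type*} (s : Finset α) (P : α → Prop) [DecidablePred P] :
    {a | a ∈ (s : Set α) ∧ P a}.ncard = #{a ∈ s | P a} := by
  rw [← Set.ncard_coe_finset, Finset.coe_filter]
  rfl

lemma ReachIn.mem_of_closed {V : Type} {G : SimpleGraph V} {C A : Set V} {a b : V}
    (h : ReachIn G C a b) (ha : a ∈ A) (hA : ∀ x ∈ A, ∀ y ∈ C, G.Adj x y → y ∈ A) : b ∈ A := by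
  induction h with
  | refl => exact ha
  | tail _ hxy ih => exact hA _ ih _ hxy.2.1 hxy.2.2

lemma ReachIn.interedges_sdiff_nonempty {V : Type} {G : SimpleGraph V} [DecidableRel G.Adj]
    [DecidableEq V] {C D : Finset V} {a b : V} (h : ReachIn G C a b) (haC : a ∈ C) (haD : a ∉ D)
    (hbD : b ∈ D) : (G.interedges D (C \ D)).Nonempty := by
  by_contra h0
  have hclosed : ∀ x ∈ {x | x ∈ C ∧ x ∉ D}, ∀ v ∈ (C : Set V), G.Adj x v →
      v ∈ {x | x ∈ C ∧ x ∉ D} := by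
    rintro x ⟨hxC, hxD⟩ v hv hxv
    refine ⟨hv, fun hvD => h0 ⟨(v, x), ?_⟩⟩
    exact G.mk_mem_interedges_iff.mpr ⟨hvD, mem_sdiff.mpr ⟨hxC, hxD⟩, hxv.symm⟩
  exact (h.mem_of_closed (A := {x | x ∈ C ∧ x ∉ D}) ⟨haC, haD⟩ hclosed).2 hbD

namespace BurlingTree

open scoped Classical

variable {V : Type} (T : BurlingTree V)

def StrictAnc (a v : V) : Prop := T.Anc a v ∧ a ≠ v

lemma anc_refl (v : V) : T.Anc v v := ⟨0, rfl⟩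

lemma strictAnc_irrefl (v : V) : ¬ T.StrictAnc v v := fun h => h.2 rfl

lemma anc_parent (v : V) : T.Anc (T.parent v) v := ⟨1, rfl⟩

variable {T}

lemma anc_trans {a b v : V} (hab : T.Anc a b) (hbv : T.Anc b v) : T.Anc a v := by
  obtain ⟨n, rfl⟩ := hab
  obtain ⟨m, rfl⟩ := hbv
  exact ⟨n + m, Function.iterate_add_apply _ _ _ _⟩

lemma anc_of_anc_parent {a v : V} (h : T.Anc a (T.parent v)) : T.Anc a v :=
  anc_trans h (T.anc_parent v)

lemma anc_parent_of_strictAnc {a v : V} (h : T.StrictAnc a v) : T.Anc a (T.parent v) := by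
  obtain ⟨⟨n, hn⟩, hne⟩ := h
  cases n with
  | zero => exact absurd hn.symm hne
  | succ n => exact ⟨n, hn⟩

lemma anc_total {a b v : V} (ha : T.Anc a v) (hb : T.Anc b v) : T.Anc a b ∨ T.Anc b a := by
  obtain ⟨n, rfl⟩ := ha
  obtain ⟨m, rfl⟩ := hb
  rcases le_total n m with h | h
  · obtain ⟨k, rfl⟩ := Nat.exists_eq_add_of_le h
    exact Or.inr ⟨k, by rw [add_comm, Function.iterate_add_apply]⟩
  · obtain ⟨k, rfl⟩ := Nat.exists_eq_add_of_le h
    exact Or.inl ⟨k, by rw [add_comm, Function.iterate_add_apply]⟩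

variable (T) in
noncomputable def depth (v : V) : ℕ := Nat.find (T.reaches_root v)

lemma iterate_depth (v : V) : T.parent^[T.depth v] v = T.root := Nat.find_spec (T.reaches_root v)

lemma depth_le_of_iterate {v : V} {n : ℕ} (h : T.parent^[n] v = T.root) : T.depth v ≤ n :=
  Nat.find_le h

lemma depth_parent {v : V} (hv : v ≠ T.root) : T.depth v = T.depth (T.parent v) + 1 := by
  apply le_antisymm
  · apply depth_le_of_iterate
    rw [Function.iterate_succ_apply, iterate_depth]
  · have h := iterate_depth (T := T) v
    obtain ⟨k, hk⟩ := Nat.exists_eq_add_one_of_ne_zero fun h0 : T.depth v = 0 =>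
      hv (by rwa [h0] at h)
    rw [hk, Function.iterate_succ_apply] at h
    have := depth_le_of_iterate h
    omega

lemma depth_lt_of_strictAnc {a v : V} (h : T.StrictAnc a v) : T.depth a < T.depth v := by
  obtain ⟨⟨n, hn⟩, hne⟩ := h
  induction n generalizing v with
  | zero => exact absurd hn.symm hne
  | succ n ih =>
    have hv : v ≠ T.root := by
      rintro rfl
      exact hne (by rw [← hn, Function.iterate_fixed T.parent_root])
    rw [depth_parent hv]
    by_cases hp : a = T.parent v
    · rw [hp]; omega
    · have := ih (v := T.parent v) hp hn
      omega

lemma depth_le_of_anc {a v : V} (h : T.Anc a v) : T.depth a ≤ T.depth v := by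
  by_cases hne : a = v
  · rw [hne]
  · exact (depth_lt_of_strictAnc ⟨h, hne⟩).le

lemma anc_antisymm {a b : V} (hab : T.Anc a b) (hba : T.Anc b a) : a = b := by
  by_contra hne
  exact (depth_lt_of_strictAnc ⟨hab, hne⟩).not_ge (depth_le_of_anc hba)

lemma not_anc_of_siblings {a b v : V} (hab : a ≠ b) (ha : a ≠ T.root) (hb : b ≠ T.root)
    (hp : T.parent a = T.parent b) (hav : T.Anc a v) (hbv : T.Anc b v) : False := by
  have hd : T.depth a = T.depth b := by rw [depth_parent ha, depth_parent hb, hp]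
  rcases anc_total hav hbv with h | h
  · exact (depth_lt_of_strictAnc ⟨h, hab⟩).ne hd
  · exact (depth_lt_of_strictAnc ⟨h, hab.symm⟩).ne hd.symm

variable {u v w t : V}

lemma exists_branch_of_mem_choose (h : v ∈ T.choose u) :
    u ≠ T.root ∧ T.lastBorn (T.parent u) ≠ u ∧ T.lastBorn (T.parent u) ≠ T.root ∧
      T.parent (T.lastBorn (T.parent u)) = T.parent u ∧
      ∃ b, T.choose u = {x | T.Anc (T.lastBorn (T.parent u)) x ∧ T.Anc x b} := by
  have hu : u ≠ T.root := by
    rintro rfl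
    simp [T.choose_root] at h
  have hL : T.lastBorn (T.parent u) ≠ u := by
    intro hL
    simp [T.choose_lastBorn u hu hL] at h
  obtain ⟨hLroot, hLparent⟩ := T.lastBorn_child (T.parent u) u hu rfl
  rcases T.choose_branch u hu hL with h0 | ⟨b, -, hb⟩
  · simp [h0] at h
  · exact ⟨hu, hL, hLroot, hLparent, b, hb⟩

lemma anc_of_mem_choose (h : v ∈ T.choose u) : T.Anc (T.lastBorn (T.parent u)) v := by
  obtain ⟨-, -, -, -, b, hb⟩ := exists_branch_of_mem_choose h
  rw [hb] at h
  exact h.1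

lemma mem_choose_of_anc_of_anc (h : v ∈ T.choose u) (hLt : T.Anc (T.lastBorn (T.parent u)) t)
    (htv : T.Anc t v) : t ∈ T.choose u := by
  obtain ⟨-, -, -, -, b, hb⟩ := exists_branch_of_mem_choose h
  rw [hb] at h ⊢
  exact ⟨hLt, anc_trans htv h.2⟩

lemma anc_or_anc_of_mem_choose (hv : v ∈ T.choose u) (hw : w ∈ T.choose u) :
    T.Anc v w ∨ T.Anc w v := by
  obtain ⟨-, -, -, -, b, hb⟩ := exists_branch_of_mem_choose hv
  rw [hb] at hv hw
  exact anc_total hv.2 hw.2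

lemma not_anc_of_mem_choose (h : v ∈ T.choose u) : ¬ T.Anc u v := fun huv => by
  obtain ⟨hu, hL, hLroot, hLparent, -⟩ := exists_branch_of_mem_choose h
  exact not_anc_of_siblings hL hLroot hu hLparent (anc_of_mem_choose h) huv

lemma not_anc_of_mem_choose' (h : v ∈ T.choose u) : ¬ T.Anc v u := fun hvu => by
  obtain ⟨hu, hL, hLroot, hLparent, -⟩ := exists_branch_of_mem_choose h
  exact not_anc_of_siblings hL hLroot hu hLparent (anc_trans (anc_of_mem_choose h) hvu)
    (T.anc_refl u)

lemma mem_choose_of_anc (h : v ∈ T.choose u) (htv : T.Anc t v) (htu : ¬ T.Anc t u) :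
    t ∈ T.choose u := by
  rcases anc_total (anc_of_mem_choose h) htv with hLt | htL
  · exact mem_choose_of_anc_of_anc h hLt htv
  · by_cases hL : t = T.lastBorn (T.parent u)
    · exact mem_choose_of_anc_of_anc h (hL ▸ T.anc_refl t) htv
    · obtain ⟨-, -, -, hLparent, -⟩ := exists_branch_of_mem_choose h
      have := anc_parent_of_strictAnc ⟨htL, hL⟩
      rw [hLparent] at this
      exact absurd (anc_of_anc_parent this) htu

lemma strictAnc_of_mem_choose (hta : T.StrictAnc t u) (h : v ∈ T.choose u) :
    T.StrictAnc t v := by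
  obtain ⟨-, -, hLroot, hLparent, -⟩ := exists_branch_of_mem_choose h
  have htL : T.StrictAnc t (T.lastBorn (T.parent u)) := by
    have htp := anc_parent_of_strictAnc hta
    rw [← hLparent] at htp
    refine ⟨anc_of_anc_parent htp, ?_⟩
    rintro rfl
    have := depth_le_of_anc (anc_parent_of_strictAnc hta)
    rw [depth_parent hLroot, hLparent] at this
    omega
  refine ⟨anc_trans htL.1 (anc_of_mem_choose h), ?_⟩
  rintro rfl
  exact (depth_lt_of_strictAnc htL).not_ge (depth_le_of_anc (anc_of_mem_choose h))

lemma depth_le_of_mem_choose (h : v ∈ T.choose u) : T.depth u ≤ T.depth v := by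
  obtain ⟨hu, -, hLroot, hLparent, -⟩ := exists_branch_of_mem_choose h
  have := depth_le_of_anc (anc_of_mem_choose h)
  rw [depth_parent hLroot, hLparent, ← depth_parent hu] at this
  exact this

lemma choose_eq_empty_of_depth_eq (h : v ∈ T.choose u) (hd : T.depth u = T.depth v) :
    T.choose v = ∅ := by
  obtain ⟨hu, -, hLroot, hLparent, -⟩ := exists_branch_of_mem_choose h
  have hLv : T.lastBorn (T.parent u) = v := by
    by_contra hne
    have := depth_lt_of_strictAnc ⟨anc_of_mem_choose h, hne⟩
    rw [depth_parent hLroot, hLparent, ← depth_parent hu] at this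
    omega
  subst hLv
  exact T.choose_lastBorn _ hLroot (by rw [hLparent])

lemma not_strictAnc_of_mem_choose (h : v ∈ T.choose u) (hw : T.Anc v w ∨ v ∈ T.choose w) :
    ¬ T.StrictAnc u w := by
  intro huw
  rcases hw with hvw | hvw
  · rcases anc_total huw.1 hvw with huv | hvu
    exacts [not_anc_of_mem_choose h huv, not_anc_of_mem_choose' h hvu]
  · exact not_anc_of_mem_choose h (strictAnc_of_mem_choose huw hvw).1

variable (T) in
/-- Arcs never decrease depth, and an arc between vertices of equal depth ends at a last-born,
whose `choose` is empty: this potential strictly increases along arcs. -/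
noncomputable def rank (v : V) : ℕ := 2 * T.depth v + if T.choose v = ∅ then 1 else 0

lemma rank_lt_of_mem_choose (h : v ∈ T.choose u) : T.rank u < T.rank v := by
  have hu : T.choose u ≠ ∅ := Set.nonempty_iff_ne_empty.mp ⟨v, h⟩
  have hd := depth_le_of_mem_choose h
  unfold rank
  rw [if_neg hu]
  rcases hd.lt_or_eq with hlt | heq
  · split_ifs <;> omega
  · rw [if_pos (choose_eq_empty_of_depth_eq h heq)]
    omega

variable {S : Set V}

lemma arc_asymm (h : T.Arc S u v) : ¬ T.Arc S v u := fun h' =>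
  (rank_lt_of_mem_choose h.2.2).not_gt (rank_lt_of_mem_choose h'.2.2)

lemma adj_of_arc (h : T.Arc S u v) : (T.UGraph S).Adj u v :=
  (SimpleGraph.fromRel_adj _ _ _).mpr ⟨fun e => not_anc_of_mem_choose h.2.2 (e ▸ T.anc_refl u),
    Or.inl h⟩

lemma arc_or_arc_of_adj (h : (T.UGraph S).Adj u v) : T.Arc S u v ∨ T.Arc S v u :=
  ((SimpleGraph.fromRel_adj _ _ _).mp h).2

lemma not_anc_of_adj (h : (T.UGraph S).Adj u v) : ¬ T.Anc u v := by
  rcases arc_or_arc_of_adj h with h | h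
  · exact not_anc_of_mem_choose h.2.2
  · exact not_anc_of_mem_choose' h.2.2

lemma arc_of_adj_strictAnc {y : V} (hyS : y ∈ S) (hyv : T.StrictAnc y v) (hyu : ¬ T.Anc y u)
    (h : (T.UGraph S).Adj u v) : T.Arc S u v ∧ T.Arc S u y := by
  rcases arc_or_arc_of_adj h with h | h
  · exact ⟨h, h.1, hyS, mem_choose_of_anc h.2.2 hyv.1 hyu⟩
  · exact absurd (strictAnc_of_mem_choose hyv h.2.2).1 hyu

lemma adj_of_adj_strictAnc {y : V} (hyS : y ∈ S) (hyv : T.StrictAnc y v)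
    (hyu : ¬ T.StrictAnc y u) (h : (T.UGraph S).Adj u v) : (T.UGraph S).Adj y u := by
  have huy : u ≠ y := by
    rintro rfl
    exact not_anc_of_adj h hyv.1
  exact (adj_of_arc (arc_of_adj_strictAnc hyS hyv (fun hyu' => hyu ⟨hyu', huy.symm⟩) h).2).symm

variable {C : Finset V}

lemma card_interedges_uGraph (s : Finset V) :
    #((T.UGraph S).interedges s s) = 2 * #(Rel.interedges (T.Arc S) s s) :=
  SimpleGraph.card_interedges_fromRel (G := T.UGraph S) (r := T.Arc S) rfl
    (fun _ _ h => arc_asymm h) s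

lemma IsHole.card_adj (hC : T.IsHole S C) {x : V} (hx : x ∈ C) :
    #{y ∈ C | (T.UGraph S).Adj x y} = 2 := by
  rw [← Finset.ncard_setOf_mem_and]
  exact hC.2.2.2.1 x hx

lemma IsHole.eq_or_eq_of_adj (hC : T.IsHole S C) {x a b : V} (hx : x ∈ C) (ha : a ∈ C)
    (hb : b ∈ C) (hab : a ≠ b) (hxa : (T.UGraph S).Adj x a) (hxb : (T.UGraph S).Adj x b) :
    ∀ v ∈ C, (T.UGraph S).Adj x v → v = a ∨ v = b := by
  have hsub : ({a, b} : Finset V) ⊆ {y ∈ C | (T.UGraph S).Adj x y} := by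
    simp [insert_subset_iff, ha, hb, hxa, hxb]
  have heq := eq_of_subset_of_card_le hsub (by rw [hC.card_adj hx, card_pair hab])
  intro v hv hxv
  have : v ∈ ({a, b} : Finset V) := heq ▸ mem_filter.mpr ⟨hv, hxv⟩
  simpa using this

lemma IsHole.exists_adj_pair (hC : T.IsHole S C) {x : V} (hx : x ∈ C) :
    ∃ z₁ z₂, z₁ ≠ z₂ ∧ z₁ ∈ C ∧ z₂ ∈ C ∧ (T.UGraph S).Adj x z₁ ∧ (T.UGraph S).Adj x z₂ ∧
      ∀ u ∈ C, (T.UGraph S).Adj x u → u = z₁ ∨ u = z₂ := by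
  obtain ⟨z₁, z₂, hz, hN⟩ := card_eq_two.mp (hC.card_adj hx)
  have hmem : ∀ u, u ∈ C ∧ (T.UGraph S).Adj x u ↔ u = z₁ ∨ u = z₂ := fun u => by
    rw [← mem_filter, hN]
    simp
  exact ⟨z₁, z₂, hz, ((hmem z₁).mpr (.inl rfl)).1, ((hmem z₂).mpr (.inr rfl)).1,
    ((hmem z₁).mpr (.inl rfl)).2, ((hmem z₂).mpr (.inr rfl)).2, fun u hu h => (hmem u).mp ⟨hu, h⟩⟩

/-- Otherwise every vertex has at most one out-neighbour in `C` (they form a chain), so `C` would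
span fewer arcs than vertices, whereas a 2-regular set spans exactly as many. -/
lemma IsHole.exists_strictAnc (hC : T.IsHole S C) : ∃ y ∈ C, ∃ q ∈ C, T.StrictAnc y q := by
  by_contra! hno
  have hne : C.Nonempty := by
    rw [← card_pos, ← Set.ncard_coe_finset]
    have := hC.2.2.1
    omega
  have hout : ∀ v ∈ C, #{w ∈ C | T.Arc S v w} ≤ 1 := by
    intro v _
    refine card_le_one.mpr fun a ha b hb => ?_
    simp only [mem_filter] at ha hb
    by_contra hab
    rcases anc_or_anc_of_mem_choose ha.2.2.2 hb.2.2.2 with h | h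
    · exact hno a ha.1 b hb.1 ⟨h, hab⟩
    · exact hno b hb.1 a ha.1 ⟨h, Ne.symm hab⟩
  have hlt := Rel.card_interedges_self_lt (T.Arc S) (fun _ _ h => rank_lt_of_mem_choose h.2.2)
    hne hout
  have hcount := (T.UGraph S).card_interedges_sdiff_add_card_interedges_self (subset_refl C)
    fun x hx => hC.card_adj hx
  rw [card_interedges_uGraph] at hcount
  simp only [sdiff_self, bot_eq_empty, SimpleGraph.interedges_def, product_empty, filter_empty,
    card_empty, zero_add] at hcount
  omega

variable (T) in
structure IsAntenna (S : Set V) (C : Finset V) (y z b : V) : Prop where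
  mem : z ∈ C
  foot_mem : b ∈ C
  arc_top : T.Arc S z y
  arc_foot : T.Arc S z b
  strictAnc_foot : T.StrictAnc y b
  eq_of_adj : ∀ v ∈ C, (T.UGraph S).Adj z v → v = y ∨ v = b

/-- The edges between the strict descendants `D` of `y` in the hole and the rest of the hole all
start at the two neighbours of `y`, each of which contributes at most one of them; the cut is
nonempty by connectivity and even by the handshake lemma, so each neighbour contributes one. -/
lemma IsHole.exists_foot (hC : T.IsHole S C) {y q z : V} (hy : y ∈ C) (hq : q ∈ C)
    (hyq : T.StrictAnc y q) (hz : z ∈ C) (hyz : (T.UGraph S).Adj y z) :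
    ∃ b ∈ C, T.StrictAnc y b ∧ (T.UGraph S).Adj z b := by
  have : Std.Symm (T.UGraph S).Adj := ⟨fun _ _ h => h.symm⟩
  set D := {v ∈ C | T.StrictAnc y v}
  obtain ⟨z₁, z₂, hz₁₂, hz₁, hz₂, hyz₁, hyz₂, hNy⟩ := hC.exists_adj_pair hy
  have hfoot : ∀ z ∈ C, (T.UGraph S).Adj y z → #{v ∈ D | (T.UGraph S).Adj z v} ≤ 1 := by
    intro z hz hyz
    have hsub : {v ∈ D | (T.UGraph S).Adj z v} ⊆ {v ∈ C | (T.UGraph S).Adj z v}.erase y := by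
      intro v hv
      simp only [D, mem_filter, mem_erase] at hv ⊢
      exact ⟨hv.1.2.2.symm, hv.1.1, hv.2⟩
    have := card_le_card hsub
    rw [card_erase_of_mem (mem_filter.mpr ⟨hy, hyz.symm⟩), hC.card_adj hz] at this
    exact this
  have hcut : #((T.UGraph S).interedges D (C \ D)) ≤
      #{v ∈ D | (T.UGraph S).Adj z₁ v} + #{v ∈ D | (T.UGraph S).Adj z₂ v} := by
    rw [SimpleGraph.interedges, Rel.card_interedges_comm, Rel.card_interedges_eq_sum,
      ← sum_pair hz₁₂ (f := fun u => #{v ∈ D | (T.UGraph S).Adj u v})]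
    refine sum_le_sum_of_ne_zero fun u hu hu0 => ?_
    obtain ⟨v, hv⟩ := card_ne_zero.mp hu0
    simp only [D, mem_sdiff, mem_filter] at hu hv
    have := hNy u hu.1 (adj_of_adj_strictAnc (hC.1 hy) hv.1.2 (fun h => hu.2 ⟨hu.1, h⟩) hv.2)
    simpa using this
  have hcut_pos : ((T.UGraph S).interedges D (C \ D)).Nonempty :=
    (hC.2.2.2.2 y hy q hq).interedges_sdiff_nonempty hy
    (by simp [D, strictAnc_irrefl]) (by simp [D, hq, hyq])
  have hparity : #((T.UGraph S).interedges D (C \ D)) + 2 * #(Rel.interedges (T.Arc S) D D) =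
      2 * #D := by
    rw [← card_interedges_uGraph]
    exact (T.UGraph S).card_interedges_sdiff_add_card_interedges_self (filter_subset _ C)
      fun x hx => hC.card_adj hx
  have h₁ := hfoot z₁ hz₁ hyz₁
  have h₂ := hfoot z₂ hz₂ hyz₂
  have hpos := card_pos.mpr hcut_pos
  have hzD : #{v ∈ D | (T.UGraph S).Adj z v} ≠ 0 := by
    rcases hNy z hz hyz with rfl | rfl <;> omega
  obtain ⟨b, hb⟩ := card_ne_zero.mp hzD
  simp only [D, mem_filter] at hb
  exact ⟨b, hb.1.1, hb.1.2, hb.2⟩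

lemma IsHole.exists_isAntenna (hC : T.IsHole S C) {y q z : V} (hy : y ∈ C) (hq : q ∈ C)
    (hyq : T.StrictAnc y q) (hz : z ∈ C) (hyz : (T.UGraph S).Adj y z) :
    ∃ b, T.IsAntenna S C y z b := by
  obtain ⟨b, hb, hyb, hzb⟩ := hC.exists_foot hy hq hyq hz hyz
  obtain ⟨hzb', hzy⟩ := arc_of_adj_strictAnc (hC.1 hy) hyb (not_anc_of_adj hyz) hzb
  exact ⟨b, hz, hb, hzy, hzb', hyb, hC.eq_or_eq_of_adj hz hy hb hyb.2 hyz.symm hzb⟩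

lemma IsHole.exists_antennas (hC : T.IsHole S C) {y q : V} (hy : y ∈ C) (hq : q ∈ C)
    (hyq : T.StrictAnc y q) :
    ∃ z₁ b₁ z₂ b₂, z₁ ≠ z₂ ∧ T.IsAntenna S C y z₁ b₁ ∧ T.IsAntenna S C y z₂ b₂ ∧
      ∀ v ∈ C, v = y ∨ v = z₁ ∨ v = z₂ ∨ T.StrictAnc y v := by
  obtain ⟨z₁, z₂, hz, hz₁, hz₂, hyz₁, hyz₂, hNy⟩ := hC.exists_adj_pair hy
  obtain ⟨b₁, h₁⟩ := hC.exists_isAntenna hy hq hyq hz₁ hyz₁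
  obtain ⟨b₂, h₂⟩ := hC.exists_isAntenna hy hq hyq hz₂ hyz₂
  refine ⟨z₁, b₁, z₂, b₂, hz, h₁, h₂, fun v hv => ?_⟩
  have hclosed : ∀ x ∈ {w | w = y ∨ w = z₁ ∨ w = z₂ ∨ T.StrictAnc y w}, ∀ v ∈ (C : Set V),
      (T.UGraph S).Adj x v → v ∈ {w | w = y ∨ w = z₁ ∨ w = z₂ ∨ T.StrictAnc y w} := by
    intro x hx v hv hxv
    simp only [Set.mem_ofPred_eq] at hx ⊢
    rcases hx with hx | hx | hx | hyx
    · have := hNy v hv (hx ▸ hxv)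
      tauto
    · rcases h₁.eq_of_adj v hv (hx ▸ hxv) with h | h
      exacts [.inl h, .inr (.inr (.inr (h ▸ h₁.strictAnc_foot)))]
    · rcases h₂.eq_of_adj v hv (hx ▸ hxv) with h | h
      exacts [.inl h, .inr (.inr (.inr (h ▸ h₂.strictAnc_foot)))]
    · by_cases hyv : T.StrictAnc y v
      · tauto
      · have := hNy v hv (adj_of_adj_strictAnc (hC.1 hy) hyx hyv hxv.symm)
        tauto
  exact (hC.2.2.2.2 y hy v hv).mem_of_closed (Or.inl rfl) hclosed

lemma IsHole.eq_of_strictAnc (hC : T.IsHole S C) {y q y' q' : V} (hy : y ∈ C) (hq : q ∈ C)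
    (hyq : T.StrictAnc y q) (hy' : y' ∈ C) (hq' : q' ∈ C) (hyq' : T.StrictAnc y' q') :
    y' = y := by
  obtain ⟨z₁, b₁, z₂, b₂, -, h₁, h₂, hcover⟩ := hC.exists_antennas hy hq hyq
  have hanc : ∀ w ∈ C, T.Anc y w ∨ y ∈ T.choose w := fun w hw => by
    rcases hcover w hw with rfl | rfl | rfl | hyw
    exacts [.inl (T.anc_refl _), .inr h₁.arc_top.2.2, .inr h₂.arc_top.2.2, .inl hyw.1]
  rcases hcover y' hy' with rfl | rfl | rfl | hyy'
  · rfl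
  · exact absurd hyq' (not_strictAnc_of_mem_choose h₁.arc_top.2.2 (hanc q' hq'))
  · exact absurd hyq' (not_strictAnc_of_mem_choose h₂.arc_top.2.2 (hanc q' hq'))
  · obtain ⟨w₁, _, w₂, _, -, k₁, k₂, hcover'⟩ := hC.exists_antennas hy' hq' hyq'
    rcases hcover' y hy with rfl | rfl | rfl | hy'y
    · rfl
    · exact absurd hyy'.1 (not_anc_of_mem_choose k₁.arc_top.2.2)
    · exact absurd hyy'.1 (not_anc_of_mem_choose k₂.arc_top.2.2)
    · exact anc_antisymm hy'y.1 hyy'.1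

variable (T) in
/-- `p` is the pivot of the hole `C`; `z₁` and `z₂` are its antennas, with feet `b₁` and `b₂`. -/
structure HoleShape (S : Set V) (C : Finset V) (p z₁ b₁ z₂ b₂ : V) : Prop where
  mem : p ∈ C
  eq_of_strictAnc : ∀ y ∈ C, ∀ q ∈ C, T.StrictAnc y q → y = p
  ne : z₁ ≠ z₂
  antenna₁ : T.IsAntenna S C p z₁ b₁
  antenna₂ : T.IsAntenna S C p z₂ b₂
  cover : ∀ v ∈ C, v = p ∨ v = z₁ ∨ v = z₂ ∨ T.StrictAnc p v

lemma IsHole.exists_holeShape (hC : T.IsHole S C) :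
    ∃ p z₁ b₁ z₂ b₂, T.HoleShape S C p z₁ b₁ z₂ b₂ := by
  obtain ⟨p, hp, q, hq, hpq⟩ := hC.exists_strictAnc
  obtain ⟨z₁, b₁, z₂, b₂, hz, h₁, h₂, hcover⟩ := hC.exists_antennas hp hq hpq
  exact ⟨p, z₁, b₁, z₂, b₂, hp, fun y hy q' hq' hyq' => hC.eq_of_strictAnc hp hq hpq hy hq' hyq',
    hz, h₁, h₂, hcover⟩

variable {p z₁ b₁ z₂ b₂ c : V}

lemma IsAntenna.ne {y z b : V} (hz : T.IsAntenna S C y z b) : z ≠ y := fun e =>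
  not_anc_of_mem_choose hz.arc_top.2.2 (e ▸ T.anc_refl z)

lemma IsAntenna.arc_center_iff {z b : V} (hz : T.IsAntenna S C p z b) (hcS : c ∈ S)
    (hpc : T.Anc p c) (hgc : ∀ g ∈ C, T.Anc g c → g = p) : T.Arc S z c ↔ T.Anc c b := by
  constructor
  · intro hzc
    rcases anc_or_anc_of_mem_choose hzc.2.2 hz.arc_foot.2.2 with h | h
    · exact h
    · exact (hz.strictAnc_foot.2 (hgc b hz.foot_mem h).symm).elim
  · intro hcb
    exact ⟨hz.arc_top.1, hcS, mem_choose_of_anc_of_anc hz.arc_foot.2.2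
      (anc_trans (anc_of_mem_choose hz.arc_top.2.2) hpc) hcb⟩

lemma anc_of_arc_of_arc {v x : V} (hgc : ∀ g ∈ C, T.Anc g c → g = p) (hpv : T.StrictAnc p v)
    (hvc : T.Arc S v c) (hvx : T.Arc S v x) (hx : x ∈ C) : T.Anc c x := by
  rcases anc_or_anc_of_mem_choose hvc.2.2 hvx.2.2 with h | h
  · exact h
  · exact ((strictAnc_of_mem_choose hpv hvx.2.2).2 (hgc x hx h).symm).elim

lemma HoleShape.eq_of_arc_of_ne (hsh : T.HoleShape S C p z₁ b₁ z₂ b₂) {x t₁ t₂ : V}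
    (ht₁ : t₁ ∈ C) (ht₂ : t₂ ∈ C) (hp₁ : t₁ ≠ p) (hp₂ : t₂ ≠ p) (h₁ : T.Arc S x t₁)
    (h₂ : T.Arc S x t₂) : t₁ = t₂ := by
  by_contra hne
  rcases anc_or_anc_of_mem_choose h₁.2.2 h₂.2.2 with h | h
  · exact hp₁ (hsh.eq_of_strictAnc t₁ ht₁ t₂ ht₂ ⟨h, hne⟩)
  · exact hp₂ (hsh.eq_of_strictAnc t₂ ht₂ t₁ ht₁ ⟨h, Ne.symm hne⟩)

lemma HoleShape.eq_of_arc_of_strictAnc (hsh : T.HoleShape S C p z₁ b₁ z₂ b₂) {x t₁ t₂ : V}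
    (hpx : T.StrictAnc p x) (ht₁ : t₁ ∈ C) (ht₂ : t₂ ∈ C) (h₁ : T.Arc S x t₁)
    (h₂ : T.Arc S x t₂) : t₁ = t₂ :=
  hsh.eq_of_arc_of_ne ht₁ ht₂ (strictAnc_of_mem_choose hpx h₁.2.2).2.symm
    (strictAnc_of_mem_choose hpx h₂.2.2).2.symm h₁ h₂

/-- Unless `c` lies below `p`, the arc `c → p` would turn every neighbour of `c` on `C` into an
out-neighbour, and `choose c` cannot hold two vertices of `C` other than `p`. -/
lemma HoleShape.not_arc_center_pivot (hsh : T.HoleShape S C p z₁ b₁ z₂ b₂)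
    (hN : 3 ≤ #{y ∈ C | (T.UGraph S).Adj c y}) (hpc : ¬ T.Anc p c) : ¬ T.Arc S c p := by
  intro hcp
  have hout : ∀ y ∈ C, (T.UGraph S).Adj c y → T.Arc S c y := by
    intro y hy h
    refine (arc_or_arc_of_adj h).resolve_right fun hyc => ?_
    rcases hsh.cover y hy with rfl | rfl | rfl | hpy
    · exact arc_asymm hcp hyc
    · exact (anc_or_anc_of_mem_choose hsh.antenna₁.arc_top.2.2 hyc.2.2).elim hpc
        (not_anc_of_mem_choose hcp.2.2)
    · exact (anc_or_anc_of_mem_choose hsh.antenna₂.arc_top.2.2 hyc.2.2).elim hpc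
        (not_anc_of_mem_choose hcp.2.2)
    · exact hpc (strictAnc_of_mem_choose hpy hyc.2.2).1
  have : 1 < #({y ∈ C | (T.UGraph S).Adj c y}.erase p) := by
    have := pred_card_le_card_erase (s := {y ∈ C | (T.UGraph S).Adj c y}) (a := p)
    omega
  obtain ⟨t₁, ht₁, t₂, ht₂, hne⟩ := one_lt_card.mp this
  simp only [mem_erase, mem_filter] at ht₁ ht₂
  exact hne (hsh.eq_of_arc_of_ne ht₁.2.1 ht₂.2.1 ht₁.1 ht₂.1 (hout _ ht₁.2.1 ht₁.2.2)
    (hout _ ht₂.2.1 ht₂.2.2))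

/-- Otherwise `c` sees no vertex strictly below `p` (that would force `c → p`), so it sees exactly
`p`, `z₁` and `z₂`; then `p → c` forces `c → z₁` and `c → z₂`, two antennas in `choose c`. -/
lemma HoleShape.strictAnc_center (hsh : T.HoleShape S C p z₁ b₁ z₂ b₂) (hcC : c ∉ C)
    (hN : 3 ≤ #{y ∈ C | (T.UGraph S).Adj c y}) : T.StrictAnc p c := by
  refine ⟨?_, fun h => hcC (h ▸ hsh.mem)⟩
  by_contra hpc
  have hcp := hsh.not_arc_center_pivot hN hpc
  have hsub : {y ∈ C | (T.UGraph S).Adj c y} ⊆ {p, z₁, z₂} := by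
    intro y hy
    simp only [mem_filter] at hy
    rcases hsh.cover y hy.1 with h | h | h | hpy
    · simp [h]
    · simp [h]
    · simp [h]
    · exact absurd (arc_of_adj_strictAnc hsh.antenna₁.arc_top.2.1 hpy hpc hy.2).2 hcp
  have heq := eq_of_subset_of_card_le hsub (card_le_three.trans hN)
  have hadj : ∀ y ∈ ({p, z₁, z₂} : Finset V), (T.UGraph S).Adj c y := fun y hy =>
    (mem_filter.mp (heq ▸ hy)).2
  have hpc' : T.Arc S p c := (arc_or_arc_of_adj (hadj p (by simp))).resolve_left hcp
  have hcz : ∀ {z b}, T.IsAntenna S C p z b → (T.UGraph S).Adj c z → T.Arc S c z :=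
    fun hz h => (arc_or_arc_of_adj h).resolve_right fun hzc =>
      (anc_or_anc_of_mem_choose hz.arc_top.2.2 hzc.2.2).elim hpc (not_anc_of_mem_choose' hpc'.2.2)
  exact hsh.ne (hsh.eq_of_arc_of_ne hsh.antenna₁.mem hsh.antenna₂.mem hsh.antenna₁.ne
    hsh.antenna₂.ne (hcz hsh.antenna₁ (hadj z₁ (by simp))) (hcz hsh.antenna₂ (hadj z₂ (by simp))))

/-- A vertex of `C` above `c` is above an out-neighbour of `c` in `C`, if there is one; otherwise
all neighbours of `c` are in-neighbours, which by the crossing property are adjacent to it. -/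
lemma HoleShape.eq_of_anc_center (hsh : T.HoleShape S C p z₁ b₁ z₂ b₂) (hC : T.IsHole S C)
    (hcC : c ∉ C) (hN : 3 ≤ #{y ∈ C | (T.UGraph S).Adj c y}) :
    ∀ g ∈ C, T.Anc g c → g = p := by
  intro g hg hgc
  have hgc' : T.StrictAnc g c := ⟨hgc, fun h => hcC (h ▸ hg)⟩
  by_cases hout : ∃ t ∈ C, T.Arc S c t
  · obtain ⟨t, ht, hct⟩ := hout
    exact hsh.eq_of_strictAnc g hg t ht (strictAnc_of_mem_choose hgc' hct.2.2)
  push Not at hout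
  by_contra hgp
  have hsub : {y ∈ C | (T.UGraph S).Adj c y} ⊆ {y ∈ C | (T.UGraph S).Adj g y} := by
    intro w hw
    simp only [mem_filter] at hw ⊢
    have hwc : T.Arc S w c := (arc_or_arc_of_adj hw.2).resolve_left (hout w hw.1)
    have hgw : ¬ T.Anc g w := fun hgw => hgp (hsh.eq_of_strictAnc g hg w hw.1
      ⟨hgw, by rintro rfl; exact not_anc_of_mem_choose hwc.2.2 hgc⟩)
    exact ⟨hw.1, (adj_of_arc ⟨hwc.1, hC.1 hg, mem_choose_of_anc hwc.2.2 hgc hgw⟩).symm⟩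
  have := card_le_card hsub
  rw [hC.card_adj hg] at this
  omega

variable (T) in
noncomputable def outer (C : Finset V) (p c : V) : Finset V :=
  {v ∈ C | T.StrictAnc p v ∧ ¬ T.Anc c v}

lemma mem_outer {v : V} : v ∈ T.outer C p c ↔ v ∈ C ∧ T.StrictAnc p v ∧ ¬ T.Anc c v :=
  mem_filter

lemma outer_subset : T.outer C p c ⊆ C := filter_subset _ _

/-- Every vertex of `outer` together with `c` has at most one out-neighbour there. -/
lemma HoleShape.card_interedges_outer_lt (hsh : T.HoleShape S C p z₁ b₁ z₂ b₂) (hcC : c ∉ C)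
    (hpc : T.StrictAnc p c) (hgc : ∀ g ∈ C, T.Anc g c → g = p) :
    #(Rel.interedges (T.Arc S) (T.outer C p c) (T.outer C p c)) +
      #{v ∈ T.outer C p c | T.Arc S v c} + #{v ∈ T.outer C p c | T.Arc S c v} <
      #(T.outer C p c) + 1 := by
  set O := T.outer C p c
  have hcO : c ∉ O := fun h => hcC (mem_outer.mp h).1
  have hout : ∀ v ∈ insert c O, #{w ∈ insert c O | T.Arc S v w} ≤ 1 := by
    intro v hv
    have hpv : T.StrictAnc p v := by
      rcases mem_insert.mp hv with rfl | hv
      exacts [hpc, (mem_outer.mp hv).2.1]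
    have hc : ∀ x ∈ O, T.Arc S v x → ¬ T.Arc S v c := fun x hx hvx hvc =>
      (mem_outer.mp hx).2.2 (anc_of_arc_of_arc hgc hpv hvc hvx (mem_outer.mp hx).1)
    refine card_le_one.mpr fun a ha b hb => ?_
    simp only [mem_filter, mem_insert] at ha hb
    rcases ha with ⟨rfl | ha, hva⟩ <;> rcases hb with ⟨rfl | hb, hvb⟩
    · rfl
    · exact (hc b hb hvb hva).elim
    · exact (hc a ha hva hvb).elim
    · exact hsh.eq_of_arc_of_strictAnc hpv (mem_outer.mp ha).1 (mem_outer.mp hb).1 hva hvb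
  have hlt := Rel.card_interedges_self_lt (T.Arc S) (fun _ _ h => rank_lt_of_mem_choose h.2.2)
    (insert_nonempty c O) hout
  have hge := Rel.card_interedges_insert_ge (T.Arc S) hcO
  rw [card_insert_of_notMem hcO] at hlt
  omega

/-- An edge leaving `outer` ends at an antenna not pointing to `c`, or below `c`; in the latter
case it starts at an in-neighbour of `c`, by the crossing property. -/
lemma HoleShape.interedges_outer_subset (hsh : T.HoleShape S C p z₁ b₁ z₂ b₂) (hcC : c ∉ C)
    (hcS : c ∈ S) (hpc : T.StrictAnc p c) (hgc : ∀ g ∈ C, T.Anc g c → g = p) :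
    (T.UGraph S).interedges (T.outer C p c) (C \ T.outer C p c) ⊆
      (T.UGraph S).interedges {v ∈ T.outer C p c | T.Arc S v c} {u ∈ C | T.Anc c u} ∪
        (T.UGraph S).interedges (T.outer C p c) {z ∈ ({z₁, z₂} : Finset V) | ¬ T.Arc S z c} := by
  rintro ⟨v, u⟩ h
  simp only [SimpleGraph.mk_mem_interedges_iff, mem_union, mem_sdiff, mem_filter] at h ⊢
  obtain ⟨hvO, ⟨huC, huO⟩, hvu⟩ := h
  obtain ⟨hvC, hpv, hcv⟩ := mem_outer.mp hvO
  have hantenna : ∀ b, T.IsAntenna S C p u b → u ∈ ({z₁, z₂} : Finset V) →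
      v ∈ T.outer C p c ∧ (u ∈ ({z₁, z₂} : Finset V) ∧ ¬ T.Arc S u c) ∧ (T.UGraph S).Adj v u := by
    intro b hu huz
    obtain rfl := (hu.eq_of_adj v hvC hvu.symm).resolve_left hpv.2.symm
    exact ⟨hvO, ⟨huz, fun huc => hcv ((hu.arc_center_iff hcS hpc.1 hgc).mp huc)⟩, hvu⟩
  rcases hsh.cover u huC with rfl | rfl | rfl | hpu
  · exact absurd hpv.1 (not_anc_of_adj hvu.symm)
  · exact .inr (hantenna b₁ hsh.antenna₁ (by simp))
  · exact .inr (hantenna b₂ hsh.antenna₂ (by simp))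
  · have hcu : T.Anc c u := by
      by_contra hcu
      exact huO (mem_outer.mpr ⟨huC, hpu, hcu⟩)
    have hvc := (arc_of_adj_strictAnc hcS ⟨hcu, fun h => hcC (h ▸ huC)⟩ hcv hvu).2
    exact .inl ⟨⟨hvO, hvc⟩, ⟨huC, hcu⟩, hvu⟩

lemma HoleShape.card_cut_outer_le (hsh : T.HoleShape S C p z₁ b₁ z₂ b₂) (hcC : c ∉ C)
    (hcS : c ∈ S) (hpc : T.StrictAnc p c) (hgc : ∀ g ∈ C, T.Anc g c → g = p) :
    #((T.UGraph S).interedges (T.outer C p c) (C \ T.outer C p c)) ≤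
      #{v ∈ T.outer C p c | T.Arc S v c} + #{z ∈ ({z₁, z₂} : Finset V) | ¬ T.Arc S z c} := by
  have : Std.Symm (T.UGraph S).Adj := ⟨fun _ _ h => h.symm⟩
  set O := T.outer C p c
  set W := {v ∈ O | T.Arc S v c}
  set Z := {z ∈ ({z₁, z₂} : Finset V) | ¬ T.Arc S z c}
  set I := {u ∈ C | T.Anc c u}
  have hWI : ∀ w ∈ W, #{u ∈ I | (T.UGraph S).Adj w u} ≤ 1 := by
    intro w hw
    obtain ⟨-, hpw, hcw⟩ := mem_outer.mp (mem_filter.mp hw).1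
    have harc : ∀ u ∈ I, (T.UGraph S).Adj w u → T.Arc S w u := fun u hu h =>
      (arc_or_arc_of_adj h).resolve_right fun huw => hcw (strictAnc_of_mem_choose
        ⟨(mem_filter.mp hu).2, fun e => hcC (e ▸ (mem_filter.mp hu).1)⟩ huw.2.2).1
    refine card_le_one.mpr fun a ha b hb => ?_
    obtain ⟨ha, hwa⟩ := mem_filter.mp ha
    obtain ⟨hb, hwb⟩ := mem_filter.mp hb
    exact hsh.eq_of_arc_of_strictAnc hpw (mem_filter.mp ha).1 (mem_filter.mp hb).1
      (harc a ha hwa) (harc b hb hwb)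
  have hZO : ∀ z ∈ Z, #{v ∈ O | (T.UGraph S).Adj z v} ≤ 1 := by
    intro z hz
    obtain ⟨b, hb⟩ : ∃ b, T.IsAntenna S C p z b := by
      rcases mem_insert.mp (mem_filter.mp hz).1 with rfl | hz
      exacts [⟨b₁, hsh.antenna₁⟩, ⟨b₂, (mem_singleton.mp hz) ▸ hsh.antenna₂⟩]
    refine card_le_one.mpr fun x hx y hy => ?_
    have hb' : ∀ v ∈ {v ∈ O | (T.UGraph S).Adj z v}, v = b := fun v hv => by
      obtain ⟨hvO, hzv⟩ := mem_filter.mp hv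
      exact (hb.eq_of_adj v (mem_outer.mp hvO).1 hzv).resolve_left (mem_outer.mp hvO).2.1.2.symm
    rw [hb' x hx, hb' y hy]
  calc #((T.UGraph S).interedges O (C \ O))
      ≤ #((T.UGraph S).interedges W I) + #((T.UGraph S).interedges O Z) :=
        (card_le_card (hsh.interedges_outer_subset hcC hcS hpc hgc)).trans (card_union_le _ _)
    _ ≤ ∑ _w ∈ W, 1 + ∑ _z ∈ Z, 1 := by
        rw [SimpleGraph.interedges, SimpleGraph.interedges, Rel.card_interedges_comm O,
          Rel.card_interedges_eq_sum, Rel.card_interedges_eq_sum]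
        exact add_le_add (sum_le_sum hWI) (sum_le_sum hZO)
    _ = #W + #Z := by simp

lemma HoleShape.card_adj_center_le (hsh : T.HoleShape S C p z₁ b₁ z₂ b₂)
    (hpc : T.StrictAnc p c) :
    #{y ∈ C | (T.UGraph S).Adj c y} ≤ #{v ∈ T.outer C p c | T.Arc S v c} +
      #{v ∈ T.outer C p c | T.Arc S c v} + #{z ∈ ({z₁, z₂} : Finset V) | T.Arc S z c} := by
  have hsub : {y ∈ C | (T.UGraph S).Adj c y} ⊆ {v ∈ T.outer C p c | T.Arc S v c} ∪
      {v ∈ T.outer C p c | T.Arc S c v} ∪ {z ∈ ({z₁, z₂} : Finset V) | T.Arc S z c} := by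
    intro y hy
    obtain ⟨hyC, hcy⟩ := mem_filter.mp hy
    simp only [mem_union, mem_filter, mem_outer]
    rcases arc_or_arc_of_adj hcy with hcy | hyc
    · exact .inl (.inr ⟨⟨hyC, strictAnc_of_mem_choose hpc hcy.2.2, not_anc_of_mem_choose hcy.2.2⟩,
        hcy⟩)
    · rcases hsh.cover y hyC with rfl | rfl | rfl | hpy
      · exact absurd hpc.1 (not_anc_of_mem_choose hyc.2.2)
      · exact .inr ⟨by simp, hyc⟩
      · exact .inr ⟨by simp, hyc⟩
      · exact .inl (.inl ⟨⟨hyC, hpy, not_anc_of_mem_choose' hyc.2.2⟩, hyc⟩)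
  exact (card_le_card hsub).trans
    ((card_union_le _ _).trans (add_le_add_left (card_union_le _ _) _))

end BurlingTree

/-- No wheel is a Burling graph: no graph derived from a Burling tree
consists of a hole `C` (induced cycle of length at least 4) together with one
additional vertex `c` having at least three neighbors in `C`. -/
theorem stmt18 (V : Type) (T : BurlingTree V) (S : Set V) (C : Set V) (c : V)
    (hc : c ∉ C) (hS : S = insert c C)
    (hhole : T.IsHole S C)
    (hdeg : 3 ≤ ({y | y ∈ C ∧ (T.UGraph S).Adj c y}).ncard) :
    False := by
  classical
  obtain ⟨C, rfl⟩ := hhole.2.1.exists_finset_coe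
  rw [Finset.ncard_setOf_mem_and] at hdeg
  have hcC : c ∉ C := hc
  have hcS : c ∈ S := hS ▸ Set.mem_insert c _
  obtain ⟨p, z₁, b₁, z₂, b₂, hsh⟩ := hhole.exists_holeShape
  have hpc := hsh.strictAnc_center hcC hdeg
  have hgc := hsh.eq_of_anc_center hhole hcC hdeg
  have hforest := hsh.card_interedges_outer_lt hcC hpc hgc
  have hcut_le := hsh.card_cut_outer_le hcC hcS hpc hgc
  have hadj_le := hsh.card_adj_center_le hpc
  have hZ := card_filter_add_card_filter_not (s := {z₁, z₂}) (T.Arc S · c)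
  have := card_le_two (a := z₁) (b := z₂)
  set O := T.outer C p c
  have hcut : #((T.UGraph S).interedges O (C \ O)) + 2 * #(Rel.interedges (T.Arc S) O O) =
      2 * #O := by
    rw [← BurlingTree.card_interedges_uGraph]
    exact (T.UGraph S).card_interedges_sdiff_add_card_interedges_self BurlingTree.outer_subset
      fun x hx => hhole.card_adj hx
  omega
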